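/- arXiv:1803.03659 — 4 statements merged into one kernel-verified Lean document; each statement's English description precedes it below -/
import Mathlib

section
/- The set system induced by a connected hereditary graph property is strongly accessible: if X, Y ∈ F with X ⊂ Y, then there exists z ∈ Y \ X such that X ∪ {z} ∈ F. -/
lemma walk_cross {W : Type*} {G' : SimpleGraph W} (P : W → Prop) {u v : W}
    (p : G'.Walk u v) (hu : P u) (hv : ¬ P v) :
    ∃ a b, G'.Adj a b ∧ P a ∧ ¬ P b := by
  induction p with
  | nil => exact absurd hu hv
  | @cons a b c h q ih =>
    by_cases hw : P b
    · exact ih hw hv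
    · exact ⟨a, b, h, hu, hw⟩

lemma singleton_induce_connected {V : Type*} (G : SimpleGraph V) (z : V) :
    (G.induce ({z} : Set V)).Connected := by
  constructor
  · rintro ⟨a, ha⟩ ⟨b, hb⟩
    simp only [Set.mem_singleton_iff] at ha hb
    subst ha; subst hb
    exact SimpleGraph.Reachable.refl _

/-- The set system induced by a connected hereditary graph property is
strongly accessible. -/
theorem stmt_5 {V : Type*} [Fintype V] [DecidableEq V] (G : SimpleGraph V)
    (F : Finset V → Prop)
    (hempty : F ∅)
    (hconn : ∀ X : Finset V, F X → X ≠ ∅ → (G.induce (X : Set V)).Connected)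
    (hher : ∀ X Y : Finset V, X ⊆ Y → (X = ∅ ∨ (G.induce (X : Set V)).Connected) →
      F Y → F X) :
    ∀ X Y : Finset V, F X → F Y → X ⊂ Y → ∃ z ∈ Y \ X, F (X ∪ {z}) := by
  intro X Y hFX hFY hXY
  obtain ⟨hsub, hne⟩ := hXY
  rcases eq_or_ne X ∅ with hX | hX
  · subst hX
    have hYne : Y.Nonempty := Finset.nonempty_iff_ne_empty.2 (by rintro rfl; exact hne (le_refl _))
    obtain ⟨z, hz⟩ := hYne
    refine ⟨z, Finset.mem_sdiff.2 ⟨hz, Finset.notMem_empty z⟩, ?_⟩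
    refine hher _ Y (by simp [hz]) (Or.inr ?_) hFY
    have : ((∅ ∪ {z} : Finset V) : Set V) = ({z} : Set V) := by simp
    rw [this]
    exact singleton_induce_connected G z
  · -- X nonempty; find y ∈ Y \ X
    have hXne : X.Nonempty := Finset.nonempty_iff_ne_empty.2 hX
    obtain ⟨x0, hx0⟩ := hXne
    obtain ⟨y0, hy0Y, hy0X⟩ : ∃ y ∈ Y, y ∉ X := by
      by_contra h
      push_neg at h
      exact hne (fun a ha => h a ha)
    have hYconn := hconn Y hFY (by rintro rfl; exact absurd (hsub hx0) (Finset.notMem_empty x0))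
    have hreach := hYconn.preconnected ⟨x0, hsub hx0⟩ ⟨y0, hy0Y⟩
    obtain ⟨p⟩ := hreach
    obtain ⟨a, b, hab, haX, hbX⟩ :=
      walk_cross (fun w : (Y : Set V) => w.val ∈ X) p hx0 hy0X
    have hadj : G.Adj a.val b.val := hab
    refine ⟨b.val, Finset.mem_sdiff.2 ⟨b.2, hbX⟩, ?_⟩
    refine hher _ Y (Finset.union_subset hsub (by simp [b.2])) (Or.inr ?_) hFY
    have hcoe : ((X ∪ {b.val} : Finset V) : Set V) = (X : Set V) ∪ ({b.val} : Set V) := by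
      simp
    rw [hcoe]
    exact SimpleGraph.connected_induce_union (hconn X hFX hX).preconnected
      (singleton_induce_connected G b.val).preconnected haX rfl hadj
end

section
/- The set system induced by a connected hereditary graph property verifies the commutable property: for any nonempty X ∈ F and Y ∈ F with X ⊂ Y, and any a, b ∈ Y \ X, if X ∪ {a} ∈ F and X ∪ {b} ∈ F then X ∪ {a, b} ∈ F. -/
/-- The set system induced by a connected hereditary graph property
verifies the commutable property. -/
theorem stmt_6 {V : Type*} [Fintype V] [DecidableEq V] (G : SimpleGraph V)
    (F : Finset V → Prop)
    (hempty : F ∅)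
    (hconn : ∀ X : Finset V, F X → X ≠ ∅ → (G.induce (X : Set V)).Connected)
    (hher : ∀ X Y : Finset V, X ⊆ Y → (X = ∅ ∨ (G.induce (X : Set V)).Connected) →
      F Y → F X) :
    ∀ X Y : Finset V, F X → F Y → X ≠ ∅ → X ⊂ Y → ∀ a ∈ Y \ X, ∀ b ∈ Y \ X,
      F (X ∪ {a}) → F (X ∪ {b}) → F (X ∪ {a, b}) := by
  intro X Y hX hY hXne hXY a ha b hb hFa hFb
  simp only [Finset.mem_sdiff] at ha hb
  have hkey : X ∪ {a, b} = (X ∪ {a}) ∪ (X ∪ {b}) := by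
    ext x; simp [Finset.mem_union, Finset.mem_insert]; tauto
  have hca : (G.induce ((X ∪ {a} : Finset V) : Set V)).Connected :=
    hconn _ hFa (Finset.nonempty_iff_ne_empty.1 ⟨a, by simp⟩)
  have hcb : (G.induce ((X ∪ {b} : Finset V) : Set V)).Connected :=
    hconn _ hFb (Finset.nonempty_iff_ne_empty.1 ⟨b, by simp⟩)
  have hsub : X ∪ {a, b} ⊆ Y := by
    intro x hx
    rcases Finset.mem_union.1 hx with h | h
    · exact hXY.1 h
    · rcases Finset.mem_insert.1 h with rfl | h
      · exact ha.1
      · rw [Finset.mem_singleton.1 h]; exact hb.1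
  apply hher _ Y hsub _ hY
  right
  rw [hkey]
  rw [Finset.coe_union]
  apply SimpleGraph.induce_union_connected hca.preconnected hcb.preconnected
  obtain ⟨x, hx⟩ := Finset.nonempty_iff_ne_empty.2 hXne
  exact ⟨x, by simp [hx]⟩
end

section
/- Let (U, F) be a finite commutable set system with choose function satisfying: for X ∈ F and A ⊆ U, if b = choose(X, A) and Y ⊆ A is such that X ∪ Y ∈ F and b ∈ (X ∪ Y)⁺_A, then b = choose(X ∪ Y, A), provided the starting element (source) is unchanged. Then for any maximal solution S with parent P = parent(S), the parent index w = pi(S) does not belong to P. -/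
variable {α : Type*} [DecidableEq α] [LinearOrder α] [Inhabited α]

/-- `X⁺_A`: the elements of `A \ X` that can be added to `X` staying in `F`. -/
def extSet (F : Finset α → Prop) [DecidablePred F] (A X : Finset α) : Finset α :=
  (A \ X).filter (fun a => F (insert a X))

/-- One step of `complete` with a user-supplied `choose` function: add `choose X A`
as long as it is a valid extension (i.e. while `X⁺_A ≠ ∅` for a sound `choose`). -/
def stepC (F : Finset α → Prop) [DecidablePred F]
    (choose : Finset α → Finset α → α) (A X : Finset α) : Finset α :=
  if choose X A ∈ extSet F A X then insert (choose X A) X else X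

/-- `complete(X, A)`: iterate `stepC` until a fixpoint is reached (at most `|U|`
productive steps are possible). -/
def completeC [Fintype α] (F : Finset α → Prop) [DecidablePred F]
    (choose : Finset α → Finset α → α) (A X : Finset α) : Finset α :=
  (stepC F choose A)^[Fintype.card α] X

/-- `source(S)`: the minimum element of `S ∩ Z` (junk value if none exists). -/
def srcElem (F : Finset α → Prop) [DecidablePred F] (S : Finset α) : α :=
  WithTop.untopD default ((S.filter (fun x => F {x})).min)

/-- The canonical prefix `S[j+1]` of `S`: start from `{source S}` and apply `j` steps
of `complete` inside `S`. -/
def cpfxC (F : Finset α → Prop) [DecidablePred F]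
    (choose : Finset α → Finset α → α) (S : Finset α) (j : ℕ) : Finset α :=
  (stepC F choose S)^[j] {srcElem F S}

/-- The index (in our `0`-based prefix numbering) of `pi(S)`: the least `i` such that
`complete(S[i+1]) = S`. -/
noncomputable def iIdx [Fintype α] (F : Finset α → Prop) [DecidablePred F]
    (choose : Finset α → Finset α → α) (S : Finset α) : ℕ :=
  sInf {i | completeC F choose Finset.univ (cpfxC F choose S i) = S}

/-- `core(S)`: the canonical prefix of `S` preceding `pi(S)`. -/
noncomputable def coreC [Fintype α] (F : Finset α → Prop) [DecidablePred F]
    (choose : Finset α → Finset α → α) (S : Finset α) : Finset α :=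
  cpfxC F choose S (iIdx F choose S - 1)

/-- `pi(S)`: the parent index of `S`, the element chosen right after `core(S)`. -/
noncomputable def piC [Fintype α] (F : Finset α → Prop) [DecidablePred F]
    (choose : Finset α → Finset α → α) (S : Finset α) : α :=
  choose (coreC F choose S) S

/-- `parent(S) = complete(core(S))`. -/
noncomputable def parentC [Fintype α] (F : Finset α → Prop) [DecidablePred F]
    (choose : Finset α → Finset α → α) (S : Finset α) : Finset α :=
  completeC F choose Finset.univ (coreC F choose S)

section Aux

variable {α : Type*} [DecidableEq α] [LinearOrder α] [Inhabited α]
variable (F : Finset α → Prop) [DecidablePred F] (choose : Finset α → Finset α → α)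

lemma mem_extSet' {A X : Finset α} {a : α} :
    a ∈ extSet F A X ↔ a ∈ A ∧ a ∉ X ∧ F (insert a X) := by
  unfold extSet
  simp [Finset.mem_filter, Finset.mem_sdiff, and_assoc]

lemma subset_stepC (A X : Finset α) : X ⊆ stepC F choose A X := by
  unfold stepC
  by_cases hc : choose X A ∈ extSet F A X
  · rw [if_pos hc]; exact Finset.subset_insert _ _
  · rw [if_neg hc]

lemma subset_iterate_stepC (A X : Finset α) (k : ℕ) :
    X ⊆ (stepC F choose A)^[k] X := by
  induction k with
  | zero => simp
  | succ n ih =>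
    rw [Function.iterate_succ_apply']
    exact ih.trans (subset_stepC F choose A _)

lemma F_stepC {A X : Finset α} (h : F X) : F (stepC F choose A X) := by
  unfold stepC
  by_cases hc : choose X A ∈ extSet F A X
  · rw [if_pos hc]; exact ((mem_extSet' F).mp hc).2.2
  · rwa [if_neg hc]

lemma F_iterate_stepC {A X : Finset α} (h : F X) (k : ℕ) :
    F ((stepC F choose A)^[k] X) := by
  induction k with
  | zero => simpa
  | succ n ih => rw [Function.iterate_succ_apply']; exact F_stepC F choose ih

lemma stepC_subset_of_subset {A X : Finset α} (h : X ⊆ A) : stepC F choose A X ⊆ A := by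
  unfold stepC
  by_cases hc : choose X A ∈ extSet F A X
  · rw [if_pos hc]; exact Finset.insert_subset ((mem_extSet' F).mp hc).1 h
  · rwa [if_neg hc]

lemma iterate_stepC_subset {A X : Finset α} (h : X ⊆ A) (k : ℕ) :
    (stepC F choose A)^[k] X ⊆ A := by
  induction k with
  | zero => simpa
  | succ n ih => rw [Function.iterate_succ_apply']; exact stepC_subset_of_subset F choose ih

lemma stepC_of_ne {A X : Finset α} (h : stepC F choose A X ≠ X) :
    choose X A ∈ extSet F A X ∧ stepC F choose A X = insert (choose X A) X := by
  unfold stepC at h ⊢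
  by_cases hc : choose X A ∈ extSet F A X
  · rw [if_pos hc]; exact ⟨hc, rfl⟩
  · rw [if_neg hc] at h; exact absurd rfl h

/-- After `Fintype.card α` iterations, `stepC` reaches a fixpoint. -/
lemma iterate_stepC_fix [Fintype α] (A X : Finset α) (hX : X.Nonempty) :
    stepC F choose A ((stepC F choose A)^[Fintype.card α] X)
      = (stepC F choose A)^[Fintype.card α] X := by
  set g := stepC F choose A with hg
  set N := Fintype.card α with hN
  by_contra hfix
  have hne : ∀ k ≤ N, g (g^[k] X) ≠ g^[k] X := by
    intro k hk hfixk
    apply hfix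
    have heq : g^[N] X = g^[k] X := by
      rw [show N = (N - k) + k from (Nat.sub_add_cancel hk).symm,
        Function.iterate_add_apply, Function.iterate_fixed hfixk]
    rw [heq, hfixk]
  have hcard : ∀ k, k ≤ N → X.card + k ≤ (g^[k] X).card := by
    intro k
    induction k with
    | zero => simp
    | succ n ih =>
      intro hk
      have hn : n ≤ N := Nat.le_of_succ_le hk
      have h1 := ih hn
      obtain ⟨hc, heq⟩ := stepC_of_ne F choose (hne n hn)
      rw [← hg] at heq
      rw [Function.iterate_succ_apply', heq,
        Finset.card_insert_of_notMem ((mem_extSet' F).mp hc).2.1]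
      omega
  have h1 := hcard N le_rfl
  have h2 : (g^[N] X).card ≤ N := hN ▸ Finset.card_le_univ _
  have h3 : 1 ≤ X.card := Finset.card_pos.mpr hX
  omega

lemma iterate_stepC_fix_all [Fintype α] (A X : Finset α) (hX : X.Nonempty) (m : ℕ) :
    (stepC F choose A)^[m] ((stepC F choose A)^[Fintype.card α] X)
      = (stepC F choose A)^[Fintype.card α] X :=
  Function.iterate_fixed (iterate_stepC_fix F choose A X hX) m

/-- Inserting an element of `S` does not change the source, provided the set `Z`
contains an element `s` minimal among singleton-feasible elements of `S`. -/
lemma srcElem_insert_eq {S Z : Finset α} {s w : α}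
    (hsZ : s ∈ Z) (hsF : F {s}) (hmin : ∀ x ∈ S, F {x} → s ≤ x) (hwS : w ∈ S) :
    srcElem F (insert w Z) = srcElem F Z := by
  unfold srcElem
  rw [Finset.filter_insert]
  by_cases hFw : F {w}
  · rw [if_pos hFw]
    have hsw : s ≤ w := hmin w hwS hFw
    have hst : s ∈ Z.filter (fun x => F {x}) := Finset.mem_filter.mpr ⟨hsZ, hsF⟩
    have h2 : (Z.filter (fun x => F {x})).min ≤ (w : WithTop α) :=
      (Finset.min_le hst).trans (WithTop.coe_le_coe.mpr hsw)
    have hle1 : (insert w (Z.filter fun x => F {x})).min ≤ (Z.filter fun x => F {x}).min :=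
      Finset.min_mono (Finset.subset_insert _ _)
    have hle2 : (Z.filter fun x => F {x}).min ≤ (insert w (Z.filter fun x => F {x})).min := by
      apply Finset.le_min
      intro b hb
      rcases Finset.mem_insert.mp hb with rfl | hb
      · exact h2
      · exact Finset.min_le hb
    rw [le_antisymm hle1 hle2]
  · rw [if_neg hFw]

end Aux

section Main

variable {α : Type*} [DecidableEq α] [LinearOrder α] [Inhabited α]

/-- Key lemma: completing `insert w X` gives the same result as completing `X`,
whenever `w` belongs to the completion of `X`. -/
lemma completeC_insert_eq [Fintype α] (F : Finset α → Prop) [DecidablePred F]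
    (choose : Finset α → Finset α → α)
    (hcomm : ∀ X Y : Finset α, F X → F Y → X ≠ ∅ → X ⊂ Y → ∀ a ∈ Y \ X, ∀ b ∈ Y \ X,
      F (insert a X) → F (insert b X) → F (insert b (insert a X)))
    (hkey : ∀ X A Y : Finset α, Y ⊆ A → F X → F (X ∪ Y) →
      choose X A ∈ extSet F A (X ∪ Y) → srcElem F X = srcElem F (X ∪ Y) →
      choose (X ∪ Y) A = choose X A)
    (S : Finset α) (s : α) (hsF : F {s}) (hmin : ∀ x ∈ S, F {x} → s ≤ x)
    (X : Finset α) (hX : F X) (hsX : s ∈ X) (w : α) (hwS : w ∈ S)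
    (hwX : w ∉ X) (hFwX : F (insert w X))
    (hwP : w ∈ completeC F choose Finset.univ X) :
    completeC F choose Finset.univ (insert w X) = completeC F choose Finset.univ X := by
  classical
  set g := stepC F choose Finset.univ with hg
  set N := Fintype.card α with hN
  have hXne : X.Nonempty := ⟨s, hsX⟩
  have hfix : g (g^[N] X) = g^[N] X := iterate_stepC_fix F choose _ X hXne
  have hFZ : ∀ k, F (g^[k] X) := fun k => F_iterate_stepC F choose hX k
  have hsZ : ∀ k, s ∈ g^[k] X := fun k => subset_iterate_stepC F choose _ X k hsX
  have hZsub : ∀ k, g^[k] X ⊆ g^[N] X := by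
    intro k
    rcases le_or_gt k N with h | h
    · calc g^[k] X ⊆ g^[N - k] (g^[k] X) := subset_iterate_stepC F choose _ _ _
        _ = g^[N] X := by rw [← Function.iterate_add_apply, Nat.sub_add_cancel h]
    · rw [show k = (k - N) + N by omega, Function.iterate_add_apply,
        iterate_stepC_fix_all F choose _ X hXne]
  -- the first step at which w appears
  have hex : ∃ k, w ∈ g^[k + 1] X :=
    ⟨N, by rw [Function.iterate_succ_apply', hfix]; exact hwP⟩
  set k0 := Nat.find hex with hk0
  have hwk0 : w ∈ g^[k0 + 1] X := Nat.find_spec hex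
  have hwnot : ∀ k ≤ k0, w ∉ g^[k] X := by
    intro k hk
    cases k with
    | zero => simpa
    | succ n =>
      exact Nat.find_min hex (by omega)
  -- the claim: the shifted chain follows the original one
  have claim : ∀ k ≤ k0, g^[k] (insert w X) = insert w (g^[k] X) ∧ F (insert w (g^[k] X)) := by
    intro k hk
    induction k with
    | zero => exact ⟨rfl, hFwX⟩
    | succ n ih =>
      have hn : n ≤ k0 := Nat.le_of_succ_le hk
      obtain ⟨ih1, ih2⟩ := ih hn
      set Z := g^[n] X with hZ
      have hwZ : w ∉ Z := hwnot n hn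
      have hwZ1 : w ∉ g^[n + 1] X := hwnot (n + 1) hk
      -- the step at n must be productive
      have hprod : g Z ≠ Z := by
        intro hfixn
        have : g^[k0 + 1] X = Z := by
          rw [show k0 + 1 = (k0 + 1 - n) + n by omega, Function.iterate_add_apply]
          exact Function.iterate_fixed hfixn _
        rw [this] at hwk0
        exact hwnot n hn hwk0
      obtain ⟨hc, heq⟩ := stepC_of_ne F choose hprod
      rw [← hg] at heq
      set c := choose Z Finset.univ with hcdef
      obtain ⟨-, hcZ, hFcZ⟩ := (mem_extSet' F).mp hc
      have hZ1 : g^[n + 1] X = insert c Z := by rw [Function.iterate_succ_apply']; exact heq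
      have hcw : c ≠ w := by
        intro h
        exact hwZ1 (hZ1 ▸ (h ▸ Finset.mem_insert_self c Z))
      -- commutability : F (insert c (insert w Z))
      have hcP : c ∈ g^[N] X := hZsub (n + 1) (hZ1 ▸ Finset.mem_insert_self c Z)
      have hwPmem : w ∈ g^[N] X := hwP
      have hZssub : Z ⊂ g^[N] X := Finset.ssubset_iff_of_subset (hZsub n) |>.mpr ⟨c, hcP, hcZ⟩
      have hZnonempty : Z ≠ ∅ := Finset.nonempty_iff_ne_empty.mp ⟨s, hsZ n⟩
      have hcomm' : F (insert c (insert w Z)) :=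
        hcomm Z (g^[N] X) (hFZ n) (hFZ N) hZnonempty hZssub
          w (Finset.mem_sdiff.mpr ⟨hwPmem, hwZ⟩) c (Finset.mem_sdiff.mpr ⟨hcP, hcZ⟩)
          ih2 hFcZ
      -- key fact : choose (insert w Z) univ = c
      have hunion : Z ∪ {w} = insert w Z := by ext x; simp [or_comm]
      have hcext : c ∈ extSet F Finset.univ (insert w Z) :=
        (mem_extSet' F).mpr ⟨Finset.mem_univ c,
          by simp [Finset.mem_insert, hcw, hcZ], hcomm'⟩
      have hsrc : srcElem F Z = srcElem F (insert w Z) :=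
        (srcElem_insert_eq F (hsZ n) hsF hmin hwS).symm
      have hkey' : choose (insert w Z) Finset.univ = c := by
        have := hkey Z Finset.univ {w} (Finset.subset_univ _) (hFZ n)
          (hunion ▸ ih2) (hunion ▸ hcext) (hunion ▸ hsrc)
        rwa [hunion] at this
      -- conclude the step
      have hcond : choose (insert w Z) Finset.univ ∈ extSet F Finset.univ (insert w Z) :=
        hkey' ▸ hcext
      have hstep : g (insert w Z) = insert w (g^[n + 1] X) := by
        have h1 : g (insert w Z) = insert c (insert w Z) := by
          rw [hg]
          unfold stepC
          rw [if_pos hcond, hkey']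
        rw [h1, hZ1, Finset.insert_comm]
      constructor
      · rw [Function.iterate_succ_apply', ih1, hstep]
      · rw [← hstep, hg]
        exact F_stepC F choose ih2
  -- at step k0, w itself is added
  obtain ⟨hchain, _⟩ := claim k0 le_rfl
  have hZk01 : g^[k0 + 1] X = insert w (g^[k0] X) := by
    have hprod : g (g^[k0] X) ≠ g^[k0] X := by
      intro hfixn
      exact hwnot k0 le_rfl (by
        rw [Function.iterate_succ_apply', hfixn] at hwk0; exact hwk0)
    obtain ⟨hc, heq⟩ := stepC_of_ne F choose hprod
    rw [← hg] at heq
    have hZ1 : g^[k0 + 1] X = insert (choose (g^[k0] X) Finset.univ) (g^[k0] X) := by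
      rw [Function.iterate_succ_apply']; exact heq
    have : w = choose (g^[k0] X) Finset.univ := by
      have := hZ1 ▸ hwk0
      rcases Finset.mem_insert.mp this with h | h
      · exact h
      · exact absurd h (hwnot k0 le_rfl)
    rw [hZ1, ← this]
  calc completeC F choose Finset.univ (insert w X)
      = g^[N] (insert w X) := rfl
    _ = g^[(N - k0) + k0] (insert w X) := by
        congr 1
        have hk0N : k0 ≤ N - 1 := by
          apply Nat.find_le
          rw [show N - 1 + 1 = N by
            have : 1 ≤ N := Fintype.card_pos
            omega]
          exact hwP
        have : 1 ≤ N := Fintype.card_pos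
        omega
    _ = g^[N - k0] (g^[k0] (insert w X)) := Function.iterate_add_apply _ _ _ _
    _ = g^[N - k0] (g^[k0 + 1] X) := by rw [hchain, hZk01]
    _ = g^[(N - k0) + (k0 + 1)] X := (Function.iterate_add_apply _ _ _ _).symm
    _ = g^[1 + N] X := by
        congr 1
        have hk0N : k0 ≤ N - 1 := by
          apply Nat.find_le
          rw [show N - 1 + 1 = N by
            have : 1 ≤ N := Fintype.card_pos
            omega]
          exact hwP
        have : 1 ≤ N := Fintype.card_pos
        omega
    _ = g (g^[N] X) := by rw [Function.iterate_add_apply, Function.iterate_one]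
    _ = g^[N] X := hfix

end Main

/-- In a finite commutable set system, with a `choose` function
satisfying the key fact (if `b = choose(X, A)` remains addable to `X ∪ Y ∈ F` with
`Y ⊆ A` and the source is unchanged, then `b = choose(X ∪ Y, A)`), for every
non-root maximal solution `S` with parent `P = parent(S)`, the parent index
`w = pi(S)` does not belong to `P`. -/
theorem stmt_12 [Fintype α] (F : Finset α → Prop) [DecidablePred F]
    (hempty : F ∅)
    (hSA : ∀ X Y : Finset α, F X → F Y → X ⊂ Y → ∃ z ∈ Y \ X, F (insert z X))
    (hcomm : ∀ X Y : Finset α, F X → F Y → X ≠ ∅ → X ⊂ Y → ∀ a ∈ Y \ X, ∀ b ∈ Y \ X,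
      F (insert a X) → F (insert b X) → F (insert b (insert a X)))
    (choose : Finset α → Finset α → α)
    (hchoose : ∀ X A : Finset α, (extSet F A X).Nonempty → choose X A ∈ extSet F A X)
    (hkey : ∀ X A Y : Finset α, Y ⊆ A → F X → F (X ∪ Y) →
      choose X A ∈ extSet F A (X ∪ Y) → srcElem F X = srcElem F (X ∪ Y) →
      choose (X ∪ Y) A = choose X A)
    (S : Finset α) (hS : F S) (hmax : ∀ T : Finset α, F T → ¬ S ⊂ T)
    (hwit : ∃ i, completeC F choose Finset.univ (cpfxC F choose S i) = S)
    (hnotroot : iIdx F choose S ≠ 0) :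
    piC F choose S ∉ parentC F choose S := by
  classical
  intro hwPmem
  set j := iIdx F choose S with hj
  have hj1 : 1 ≤ j := Nat.one_le_iff_ne_zero.mpr hnotroot
  have hmem : completeC F choose Finset.univ (cpfxC F choose S j) = S :=
    Nat.sInf_mem hwit
  have hprev : completeC F choose Finset.univ (cpfxC F choose S (j - 1)) ≠ S := by
    have h1 : j - 1 < j := by omega
    exact Nat.notMem_of_lt_sInf h1
  -- source facts
  obtain ⟨i, hi⟩ := hwit
  have hsrcS : srcElem F S ∈ S := by
    have h1 : srcElem F S ∈ cpfxC F choose S i :=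
      subset_iterate_stepC F choose S _ i (Finset.mem_singleton_self _)
    have h2 : cpfxC F choose S i ⊆ completeC F choose Finset.univ (cpfxC F choose S i) :=
      subset_iterate_stepC F choose _ _ _
    have h3 : srcElem F S ∈ completeC F choose Finset.univ (cpfxC F choose S i) := h2 h1
    rw [hi] at h3
    exact h3
  have hSne : S.Nonempty := ⟨_, hsrcS⟩
  obtain ⟨z, hz, hzF⟩ := hSA ∅ S hempty hS (Finset.empty_ssubset.mpr hSne)
  have hzS : z ∈ S := by simpa using hz
  have hzF' : F {z} := by simpa using hzF
  have hfil : (S.filter (fun x => F {x})).Nonempty :=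
    ⟨z, Finset.mem_filter.mpr ⟨hzS, hzF'⟩⟩
  obtain ⟨s, hsmin⟩ := Finset.min_of_nonempty hfil
  have hs_eq : srcElem F S = s := by unfold srcElem; rw [hsmin]; rfl
  have hsfil : s ∈ S.filter (fun x => F {x}) := Finset.mem_of_min hsmin
  have hsS : s ∈ S := (Finset.mem_filter.mp hsfil).1
  have hsF : F {s} := (Finset.mem_filter.mp hsfil).2
  have hmin : ∀ x ∈ S, F {x} → s ≤ x := by
    intro x hx hxF
    have hxfil : x ∈ S.filter (fun y => F {y}) := Finset.mem_filter.mpr ⟨hx, hxF⟩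
    have h := Finset.min_le hxfil
    rw [hsmin] at h
    exact_mod_cast h
  -- core facts
  set core := coreC F choose S with hcoredef
  have hcoreeq : core = (stepC F choose S)^[j - 1] {srcElem F S} := rfl
  have hscore : s ∈ core := by
    rw [hcoreeq, ← hs_eq]
    exact subset_iterate_stepC F choose S _ _ (Finset.mem_singleton_self _)
  have hFcore : F core := by
    rw [hcoreeq]
    exact F_iterate_stepC F choose (show F {srcElem F S} by rw [hs_eq]; exact hsF) _
  set w := piC F choose S with hwdef
  have hw : w = choose core S := rfl
  have hwext : w ∈ extSet F S core := by
    by_contra hwe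
    apply hprev
    have hstep : stepC F choose S core = core := by
      unfold stepC; rw [← hw, if_neg hwe]
    have hcpj : cpfxC F choose S j = core := by
      rw [show j = (j - 1) + 1 by omega]
      show (stepC F choose S)^[(j - 1) + 1] {srcElem F S} = core
      rw [Function.iterate_succ_apply', ← hcoreeq, hstep]
    show completeC F choose Finset.univ core = S
    rw [← hcpj]
    exact hmem
  obtain ⟨hwS, hwcore, hFwcore⟩ := (mem_extSet' F).mp hwext
  have hcpj : cpfxC F choose S j = insert w core := by
    rw [show j = (j - 1) + 1 by omega]
    show (stepC F choose S)^[(j - 1) + 1] {srcElem F S} = insert w core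
    rw [Function.iterate_succ_apply', ← hcoreeq]
    unfold stepC
    rw [← hw, if_pos hwext]
  have hwP : w ∈ completeC F choose Finset.univ core := hwPmem
  have hmain := completeC_insert_eq F choose hcomm hkey S s hsF hmin core hFcore hscore
    w hwS hwcore hFwcore hwP
  apply hprev
  show completeC F choose Finset.univ core = S
  rw [← hmain, ← hcpj]
  exact hmem
end

section
/- Let G be a graph whose edge set is partitioned into black edges and white edges, and let G_B be the subgraph on the black edges. Define a BC-clique as a vertex set X that is a clique in G and induces a connected subgraph of G_B. Then the family of BC-cliques (together with ∅) forms a strongly accessible set system. -/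
/-- Adding a vertex adjacent to a member of a connected induced subgraph keeps it
connected. -/
lemma aux_insert_connected {V : Type*} (GB : SimpleGraph V) (s : Set V) (x z : V)
    (hx : x ∈ s) (hadj : GB.Adj x z) (hc : (GB.induce s).Connected) :
    (GB.induce (insert z s)).Connected := by
  have hsub : s ⊆ insert z s := Set.subset_insert z s
  let φ : GB.induce s →g GB.induce (insert z s) :=
    ⟨Set.inclusion hsub, fun {a b} h => h⟩
  have hx' : x ∈ insert z s := Set.mem_insert_of_mem _ hx
  have key : ∀ v : (insert z s : Set V), (GB.induce (insert z s)).Reachable v ⟨x, hx'⟩ := by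
    rintro ⟨v, hv⟩
    rcases hv with rfl | hv
    · exact SimpleGraph.Adj.reachable (by simpa using hadj.symm)
    · exact (hc.preconnected ⟨v, hv⟩ ⟨x, hx⟩).map φ
  haveI : Nonempty (insert z s : Set V) := ⟨⟨x, hx'⟩⟩
  exact ⟨fun a b => (key a).trans (key b).symm⟩

/-- Let `G` be a graph whose edges are partitioned into black and white
edges, with `GB ≤ G` the black-edge subgraph. A BC-clique is a vertex set `X` that is
a clique in `G` and induces a connected subgraph of `GB`. The family of BC-cliques
together with `∅` forms a strongly accessible set system. -/
theorem stmt_17 {V : Type*} [Fintype V] [DecidableEq V]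
    (G GB : SimpleGraph V) (hsub : GB ≤ G)
    (F : Finset V → Prop)
    (hF : ∀ X : Finset V,
      F X ↔ (X = ∅ ∨ (G.IsClique (X : Set V) ∧ (GB.induce (X : Set V)).Connected))) :
    ∀ X Y : Finset V, F X → F Y → X ⊂ Y → ∃ z ∈ Y \ X, F (X ∪ {z}) := by
  intro X Y hX hY hXY
  rcases (hF Y).1 hY with rfl | ⟨hYc, hYconn⟩
  · exact absurd hXY.subset (by simpa using hXY.ne)
  rcases (hF X).1 hX with rfl | ⟨hXc, hXconn⟩
  · -- X = ∅ : pick any vertex of Y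
    obtain ⟨z, hz, -⟩ := Finset.exists_of_ssubset hXY
    refine ⟨z, by simp [hz], ?_⟩
    rw [hF, Finset.empty_union]
    right
    constructor
    · simpa using G.isClique_singleton z
    · haveI : Nonempty (({z} : Finset V) : Set V) := ⟨⟨z, by simp⟩⟩
      refine ⟨fun a b => ?_⟩
      have : a = b := by
        rcases a with ⟨a, ha⟩; rcases b with ⟨b, hb⟩
        simp only [Finset.coe_singleton, Set.mem_singleton_iff] at ha hb
        subst ha; subst hb; rfl
      rw [this]
  · -- X nonempty BC-clique
    obtain ⟨x0, hx0⟩ : X.Nonempty := by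
      rcases hXconn.nonempty with ⟨⟨v, hv⟩⟩
      exact ⟨v, by simpa using hv⟩
    obtain ⟨y0, hy0Y, hy0X⟩ := Finset.exists_of_ssubset hXY
    have hx0Y : x0 ∈ Y := hXY.subset hx0
    -- find a crossing GB-edge from X to Y \ X using a walk in induce Y
    obtain ⟨p⟩ := hYconn.preconnected ⟨x0, by simpa using hx0Y⟩ ⟨y0, by simpa using hy0Y⟩
    obtain ⟨d, _, hdfst, hdsnd⟩ := p.exists_boundary_dart {v | (v : V) ∈ X}
      (by simpa using hx0) (by simpa using hy0X)
    set x : V := (d.fst : V)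
    set z : V := (d.snd : V)
    have hxX : x ∈ X := hdfst
    have hzX : z ∉ X := hdsnd
    have hzY : z ∈ Y := (d.snd).2
    have hadj : GB.Adj x z := d.adj
    refine ⟨z, Finset.mem_sdiff.2 ⟨hzY, hzX⟩, ?_⟩
    rw [hF]
    right
    have hcoe : ((X ∪ {z} : Finset V) : Set V) = insert z (X : Set V) := by
      simp [Finset.coe_union, Set.union_singleton]
    constructor
    · rw [hcoe]
      apply hYc.subset
      intro v hv
      rcases hv with rfl | hv
      · exact hzY
      · exact hXY.subset (by simpa using hv)
    · rw [hcoe]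
      exact aux_insert_connected GB _ x z (by simpa using hxX) hadj hXconn
end
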